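/- arXiv:1803.06117 — 6 statements merged into one kernel-verified Lean document; each statement's English description precedes it below -/
import Mathlib

section
/- Fix 0 ≤ d < k < ∞ and w ∈ (1/(k+1), 1/(d+1)). Then the equation Σ_{i=d+1}^{k+1} (w·i - 1)·x^i = 0 has a unique positive real solution ρ_w. -/
/-!
Write `f x = ∑ (w i - 1) x^i` and `s = 1/w`. A positive root exists by the intermediate value
theorem: near `0` the lowest coefficient `w (d+1) - 1 < 0` dominates, near `∞` the highest
coefficient `w (k+1) - 1 > 0` does. It is unique because `f x = w x^s ∑ (i - s) x^(i-s)` on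
`(0, ∞)`, and every term `c x^c` of the second factor is nondecreasing in `x`, strictly so when
`c ≠ 0`.
-/

open Finset Filter Topology

section Existence

variable {ι : Type*}

theorem tendsto_sum_mul_pow_nhds_zero (s : Finset ι) (a : ι → ℝ) (e : ι → ℕ) {i₀ : ι}
    (hi₀ : i₀ ∈ s) (he : ∀ i ∈ s, e i = 0 ↔ i = i₀) :
    Tendsto (fun y : ℝ => ∑ i ∈ s, a i * y ^ e i) (𝓝 0) (𝓝 (a i₀)) := by
  have hval : ∑ i ∈ s, a i * (0 : ℝ) ^ e i = a i₀ := by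
    rw [sum_eq_single_of_mem i₀ hi₀ fun i hi hne => by
      rw [zero_pow (mt (he i hi).1 hne), mul_zero], (he i₀ hi₀).2 rfl, pow_zero, mul_one]
  exact hval ▸ (continuous_finsetSum s fun i _ => by fun_prop).tendsto 0

variable (a : ℕ → ℝ) {m n : ℕ}

theorem sum_Icc_mul_pow_eq_pow_mul (x : ℝ) :
    ∑ i ∈ Icc m n, a i * x ^ i = x ^ m * ∑ i ∈ Icc m n, a i * x ^ (i - m) := by
  rw [mul_sum]
  refine sum_congr rfl fun i hi => ?_
  rw [← Nat.add_sub_cancel' (mem_Icc.1 hi).1, pow_add, Nat.add_sub_cancel_left]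
  ring

theorem sum_Icc_mul_pow_eq_pow_mul_inv {x : ℝ} (hx : x ≠ 0) :
    ∑ i ∈ Icc m n, a i * x ^ i = x ^ n * ∑ i ∈ Icc m n, a i * x⁻¹ ^ (n - i) := by
  rw [mul_sum]
  refine sum_congr rfl fun i hi => ?_
  rw [inv_pow, pow_sub₀ x hx (mem_Icc.1 hi).2]
  field_simp

theorem eventually_sum_Icc_mul_pow_neg (hmn : m ≤ n) (hm : a m < 0) :
    ∀ᶠ x in 𝓝[>] 0, ∑ i ∈ Icc m n, a i * x ^ i < 0 := by
  have hlim := tendsto_sum_mul_pow_nhds_zero (Icc m n) a (· - m)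
    (left_mem_Icc.2 hmn) fun i hi => by have := (mem_Icc.1 hi).1; omega
  filter_upwards [(tendsto_nhdsWithin_of_tendsto_nhds hlim).eventually_lt_const hm,
    self_mem_nhdsWithin] with x hneg hx
  rw [sum_Icc_mul_pow_eq_pow_mul]
  exact mul_neg_of_pos_of_neg (pow_pos hx m) hneg

theorem eventually_sum_Icc_mul_pow_pos (hmn : m ≤ n) (hn : 0 < a n) :
    ∀ᶠ x in atTop, 0 < ∑ i ∈ Icc m n, a i * x ^ i := by
  have hlim := tendsto_sum_mul_pow_nhds_zero (Icc m n) a (n - ·)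
    (right_mem_Icc.2 hmn) fun i hi => by have := (mem_Icc.1 hi).2; omega
  filter_upwards [tendsto_inv_atTop_zero.eventually (hlim.eventually_const_lt hn),
    eventually_gt_atTop 0] with x hpos hx
  rw [sum_Icc_mul_pow_eq_pow_mul_inv a hx.ne']
  exact mul_pos (pow_pos hx n) hpos

theorem exists_pos_sum_Icc_mul_pow_eq_zero (hmn : m ≤ n) (hm : a m < 0) (hn : 0 < a n) :
    ∃ x, 0 < x ∧ ∑ i ∈ Icc m n, a i * x ^ i = 0 := by
  obtain ⟨x₀, hx₀, hx₀pos⟩ :=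
    ((eventually_sum_Icc_mul_pow_neg a hmn hm).and self_mem_nhdsWithin).exists
  obtain ⟨x₁, hx₁, hx₁pos⟩ :=
    ((eventually_sum_Icc_mul_pow_pos a hmn hn).and (eventually_gt_atTop 0)).exists
  obtain ⟨x, hx, hroot⟩ := isPreconnected_Ioi.intermediate_value hx₀pos hx₁pos
    (f := fun x : ℝ => ∑ i ∈ Icc m n, a i * x ^ i) (by fun_prop) ⟨hx₀.le, hx₁.le⟩
  exact ⟨x, hx, hroot⟩

end Existence

section Uniqueness

theorem mul_rpow_self_lt_mul_rpow_self {c x y : ℝ} (hc : c ≠ 0) (hx : 0 < x) (hxy : x < y) :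
    c * x ^ c < c * y ^ c := by
  rcases hc.lt_or_gt with hc | hc
  · exact mul_lt_mul_of_neg_left (Real.rpow_lt_rpow_of_neg hx hxy hc) hc
  · exact mul_lt_mul_of_pos_left (Real.rpow_lt_rpow hx.le hxy hc) hc

theorem mul_rpow_self_le_mul_rpow_self (c : ℝ) {x y : ℝ} (hx : 0 < x) (hxy : x ≤ y) :
    c * x ^ c ≤ c * y ^ c := by
  rcases eq_or_ne c 0 with rfl | hc
  · simp
  rcases hxy.eq_or_lt with rfl | hxy
  · rfl
  · exact (mul_rpow_self_lt_mul_rpow_self hc hx hxy).le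

theorem strictMonoOn_sum_mul_rpow_self {ι : Type*} (s : Finset ι) (e : ι → ℝ)
    (he : ∃ i ∈ s, e i ≠ 0) :
    StrictMonoOn (fun x => ∑ i ∈ s, e i * x ^ e i) (Set.Ioi 0) := by
  intro x hx y _ hxy
  obtain ⟨i, hi, hei⟩ := he
  exact sum_lt_sum (fun j _ => mul_rpow_self_le_mul_rpow_self (e j) hx hxy.le)
    ⟨i, hi, mul_rpow_self_lt_mul_rpow_self hei hx hxy⟩

theorem sum_sub_one_mul_pow_eq_mul_sum_rpow {w x : ℝ} (hw : w ≠ 0) (hx : 0 < x) (s : Finset ℕ) :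
    ∑ i ∈ s, (w * i - 1) * x ^ i =
      w * x ^ (1 / w) * ∑ i ∈ s, ((i : ℝ) - 1 / w) * x ^ ((i : ℝ) - 1 / w) := by
  rw [mul_sum]
  refine sum_congr rfl fun i _ => ?_
  rw [← Real.rpow_natCast, Real.rpow_sub hx]
  field_simp

theorem subsingleton_setOf_pos_sum_sub_one_mul_pow_eq_zero {w : ℝ} (hw : 0 < w) {s : Finset ℕ}
    (hs : ∃ i ∈ s, w * i ≠ 1) :
    {x : ℝ | 0 < x ∧ ∑ i ∈ s, (w * i - 1) * x ^ i = 0}.Subsingleton := by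
  have hmono := strictMonoOn_sum_mul_rpow_self s (fun i : ℕ => (i : ℝ) - 1 / w) <| by
    obtain ⟨i, hi, hwi⟩ := hs
    refine ⟨i, hi, sub_ne_zero.2 fun h => hwi ?_⟩
    rw [h]
    field_simp
  rintro x ⟨hx, hfx⟩ y ⟨hy, hfy⟩
  refine hmono.injOn hx hy ?_
  rw [sum_sub_one_mul_pow_eq_mul_sum_rpow hw.ne' hx] at hfx
  rw [sum_sub_one_mul_pow_eq_mul_sum_rpow hw.ne' hy] at hfy
  have hx' : w * x ^ (1 / w) ≠ 0 := by positivity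
  have hy' : w * y ^ (1 / w) ≠ 0 := by positivity
  simp only [(mul_eq_zero_iff_left hx').1 hfx, (mul_eq_zero_iff_left hy').1 hfy]

end Uniqueness

theorem stmt6 (d k : ℕ) (hdk : d < k) (w : ℝ)
    (hw1 : 1 / ((k : ℝ) + 1) < w) (hw2 : w < 1 / ((d : ℝ) + 1)) :
    ∃! x : ℝ, 0 < x ∧ ∑ i ∈ Finset.Icc (d + 1) (k + 1), (w * i - 1) * x ^ i = 0 := by
  have hw : 0 < w := (by positivity : (0 : ℝ) < 1 / ((k : ℝ) + 1)).trans hw1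
  have hlow : w * ((d + 1 : ℕ) : ℝ) - 1 < 0 := by
    rw [lt_div_iff₀ (by positivity)] at hw2
    push_cast
    linarith
  have hhigh : 0 < w * ((k + 1 : ℕ) : ℝ) - 1 := by
    rw [div_lt_iff₀ (by positivity)] at hw1
    push_cast
    linarith
  obtain ⟨x, hx⟩ := exists_pos_sum_Icc_mul_pow_eq_zero (fun i => w * i - 1)
    (by omega : d + 1 ≤ k + 1) hlow hhigh
  have hunique := subsingleton_setOf_pos_sum_sub_one_mul_pow_eq_zero hw
    ⟨d + 1, left_mem_Icc.2 (by omega : d + 1 ≤ k + 1), by linarith⟩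
  exact ⟨x, hx, fun y hy => hunique hy hx⟩
end

section
/- For d ≥ 0 and w ∈ (0, 1/(d+1)), the unique positive solution ρ_w of Σ_{i=d+1}^{∞} (w·i - 1)·x^i = 0 (equivalently of the corresponding finite closed form) in the case k = ∞ is ρ_w = (1 - w(d+1))/(1 - w·d). -/
/-!
Writing `i = n + (d + 1)`, the series becomes `x ^ (d + 1)` times an arithmetico-geometric
series, whose closed form is `x ^ (d + 1) * (x * (1 - w d) - (1 - w (d + 1))) / (1 - x) ^ 2`.
For `0 < x < 1` this vanishes exactly when the linear numerator does, i.e. at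
`x = (1 - w (d + 1)) / (1 - w d)`, and `0 < w < 1 / (d + 1)` puts that point in `(0, 1)`.
-/

section ArithmeticoGeometric

variable {𝕜 : Type*} [NormedField 𝕜]

theorem hasSum_linear_mul_geometric (a b : 𝕜) {x : 𝕜} (hx : ‖x‖ < 1) :
    HasSum (fun n : ℕ ↦ (a * n + b) * x ^ n) (a * x / (1 - x) ^ 2 + b / (1 - x)) := by
  have h := ((hasSum_coe_mul_geometric_of_norm_lt_one hx).mul_left a).add
    ((hasSum_geometric_of_norm_lt_one hx).mul_left b)
  rw [mul_div_assoc, div_eq_mul_inv b]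
  exact h.congr_fun fun n ↦ by ring

theorem hasSum_tail_linear_mul_geometric (d : ℕ) (w : 𝕜) {x : 𝕜} (hx : ‖x‖ < 1) :
    HasSum (fun i : ℕ ↦ if d + 1 ≤ i then (w * i - 1) * x ^ i else 0)
      (x ^ (d + 1) * (x * (1 - w * d) - (1 - w * (d + 1))) / (1 - x) ^ 2) := by
  have hx1 : 1 - x ≠ 0 := sub_ne_zero.2 (by rintro rfl; simp at hx)
  have h := (hasSum_linear_mul_geometric w (w * (d + 1) - 1) hx).mul_left (x ^ (d + 1))
  rw [← hasSum_nat_add_iff' (d + 1), Finset.sum_eq_zero fun i hi ↦ if_neg (by simpa using hi),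
    sub_zero]
  have hval : x ^ (d + 1) * (x * (1 - w * d) - (1 - w * (d + 1))) / (1 - x) ^ 2 =
      x ^ (d + 1) * (w * x / (1 - x) ^ 2 + (w * (d + 1) - 1) / (1 - x)) := by
    field_simp
    ring
  rw [hval]
  refine h.congr_fun fun n ↦ ?_
  rw [if_pos (Nat.le_add_left _ _)]
  push_cast
  ring

theorem tsum_tail_linear_mul_geometric_eq_zero_iff (d : ℕ) (w : 𝕜) {x : 𝕜} (hx0 : x ≠ 0)
    (hx : ‖x‖ < 1) (hwd : 1 - w * d ≠ 0) :
    ∑' i : ℕ, (if d + 1 ≤ i then (w * i - 1) * x ^ i else 0) = 0 ↔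
      x = (1 - w * (d + 1)) / (1 - w * d) := by
  have hx1 : 1 - x ≠ 0 := sub_ne_zero.2 (by rintro rfl; simp at hx)
  rw [(hasSum_tail_linear_mul_geometric d w hx).tsum_eq, eq_div_iff hwd]
  simp [hx0, hx1, sub_eq_zero]

end ArithmeticoGeometric

theorem stmt7 (d : ℕ) (w : ℝ) (hw0 : 0 < w) (hw : w < 1 / ((d : ℝ) + 1)) :
    (0 < (1 - w * ((d : ℝ) + 1)) / (1 - w * d) ∧
     (1 - w * ((d : ℝ) + 1)) / (1 - w * d) < 1 ∧
     ∑' i : ℕ, (if d + 1 ≤ i then (w * i - 1) * ((1 - w * ((d : ℝ) + 1)) / (1 - w * d)) ^ i else 0) = 0) ∧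
    (∀ x : ℝ, 0 < x → x < 1 →
      ∑' i : ℕ, (if d + 1 ≤ i then (w * i - 1) * x ^ i else 0) = 0 →
      x = (1 - w * ((d : ℝ) + 1)) / (1 - w * d)) := by
  have hnum : 0 < 1 - w * ((d : ℝ) + 1) := by
    rw [lt_div_iff₀ (by positivity)] at hw
    linarith
  have hden : 0 < 1 - w * d := by linarith
  have hρ0 : 0 < (1 - w * ((d : ℝ) + 1)) / (1 - w * d) := div_pos hnum hden
  have hρ1 : (1 - w * ((d : ℝ) + 1)) / (1 - w * d) < 1 := by
    rw [div_lt_one hden]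
    linarith
  have hzero_iff {x : ℝ} (hx0 : 0 < x) (hx1 : x < 1) :=
    tsum_tail_linear_mul_geometric_eq_zero_iff d w hx0.ne'
      (by rwa [Real.norm_of_nonneg hx0.le]) hden.ne'
  exact ⟨⟨hρ0, hρ1, (hzero_iff hρ0 hρ1).2 rfl⟩,
    fun x hx0 hx1 hsum ↦ (hzero_iff hx0 hx1).1 hsum⟩
end

section
/- Fix d ≥ 0. The function σ(w) = (1 - w·d)·H(w/(1 - w·d)) on the interval (0, 1/(d+1)) is strictly concave, and it attains its unique maximum at w* = (1-ρ)/(1 + (1-ρ)·d), where ρ is the unique positive solution of 1 - x - x^{d+1} = 0; the maximal value is σ(w*) = -log₂ ρ. -/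
/-- The binary entropy function (base-2 logarithms). -/
noncomputable def binEnt (p : ℝ) : ℝ :=
  -p * Real.logb 2 p - (1 - p) * Real.logb 2 (1 - p)

/-- The exponent `σ_{d,∞}(w) = (1 - wd) H(w/(1 - wd))`. -/
noncomputable def sigmaExp (d : ℕ) (w : ℝ) : ℝ :=
  (1 - w * d) * binEnt (w / (1 - w * d))

/-!
With `η(x) = -x log x`, one has `σ(w) log 2 = η(w) + η(1 - (d+1)w) - η(1 - dw)`. Its derivative
`(d+1) log(1 - (d+1)w) - log w - d log(1 - dw)` has derivative
`-1/w - (d+1)²/(1 - (d+1)w) + d²/(1 - dw) < 0` on the interval, so `σ` is strictly concave.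
With `D = 1 + (1-ρ)d` and `ρ^(d+1) = 1 - ρ` one gets `w* = ρ^(d+1)/D`, `1 - (d+1)w* = ρ/D` and
`1 - dw* = 1/D`, so the derivative vanishes at `w*`; a critical point of a strictly concave
function is its unique maximiser. Finally `σ(w*) = H(1-ρ)/D = -log₂ ρ`, since
`log₂(1-ρ) = (d+1) log₂ ρ`.
-/

open Real Set

theorem StrictConcaveOn.lt_of_hasDerivAt_eq_zero {S : Set ℝ} {f : ℝ → ℝ} {x y : ℝ}
    (hf : StrictConcaveOn ℝ S f) (hx : x ∈ S) (hy : y ∈ S) (hyx : y ≠ x)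
    (hf' : HasDerivAt f 0 x) : f y < f x := by
  rcases hyx.lt_or_gt with hlt | hgt
  · have := hf.lt_slope_of_hasDerivAt hy hx hlt hf'
    rw [slope_def_field, div_pos_iff_of_pos_right (sub_pos.2 hlt)] at this
    linarith
  · have := hf.slope_lt_of_hasDerivAt hx hy hgt hf'
    rw [slope_def_field, div_neg_iff] at this
    rcases this with h | h <;> linarith

-- No side conditions are needed: the degenerate cases hold since `log 0 = 0` and
-- `log (-x) = log x`.
theorem mul_binEnt_div (a b : ℝ) :
    b * binEnt (a / b) = (negMulLog a + negMulLog (b - a) - negMulLog b) / log 2 := by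
  rcases eq_or_ne a 0 with rfl | ha
  · simp [binEnt]
  rcases eq_or_ne b 0 with rfl | hb
  · simp [negMulLog, log_neg_eq_log]
  rcases eq_or_ne (b - a) 0 with hab | hab
  · obtain rfl : a = b := (sub_eq_zero.mp hab).symm
    simp [binEnt, div_self ha]
  have h1 : 1 - a / b = (b - a) / b := by field_simp
  simp only [binEnt, negMulLog, logb, h1, log_div ha hb, log_div hab hb]
  field_simp
  ring

theorem binEnt_one_sub_of_pow_succ_eq {d : ℕ} {ρ : ℝ} (hρ : ρ ^ (d + 1) = 1 - ρ) :
    binEnt (1 - ρ) = -(1 + (1 - ρ) * d) * logb 2 ρ := by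
  rw [binEnt, sub_sub_cancel, ← hρ, logb_pow, hρ]
  push_cast
  ring

theorem hasDerivAt_one_sub_mul (c w : ℝ) : HasDerivAt (fun w : ℝ => 1 - w * c) (-c) w := by
  simpa using ((hasDerivAt_id w).mul_const c).const_sub 1

theorem sigmaExp_eq_negMulLog (d : ℕ) (w : ℝ) :
    sigmaExp d w =
      (negMulLog w + negMulLog (1 - w * (d + 1)) - negMulLog (1 - w * d)) / log 2 := by
  rw [sigmaExp, mul_binEnt_div]
  ring_nf

noncomputable def sigmaExpDeriv (d : ℕ) (w : ℝ) : ℝ :=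
  ((d + 1) * log (1 - w * (d + 1)) - log w - d * log (1 - w * d)) / log 2

section Derivatives

variable (d : ℕ) {w : ℝ} (hw : w ≠ 0) (hw₁ : 1 - w * (d + 1) ≠ 0) (hw₂ : 1 - w * d ≠ 0)
include hw hw₁ hw₂

theorem hasDerivAt_sigmaExp : HasDerivAt (sigmaExp d) (sigmaExpDeriv d w) w := by
  have h₁ := (hasDerivAt_negMulLog hw₁).comp w (hasDerivAt_one_sub_mul ((d : ℝ) + 1) w)
  have h₂ := (hasDerivAt_negMulLog hw₂).comp w (hasDerivAt_one_sub_mul (d : ℝ) w)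
  rw [funext (sigmaExp_eq_negMulLog d)]
  refine ((((hasDerivAt_negMulLog hw).add h₁).sub h₂).div_const (log 2)).congr_deriv ?_
  rw [sigmaExpDeriv]
  ring

theorem hasDerivAt_sigmaExpDeriv :
    HasDerivAt (sigmaExpDeriv d)
      (-(1 / w + (d + 1) ^ 2 / (1 - w * (d + 1)) - d ^ 2 / (1 - w * d)) / log 2) w := by
  have h₁ := (hasDerivAt_log hw₁).comp w (hasDerivAt_one_sub_mul ((d : ℝ) + 1) w)
  have h₂ := (hasDerivAt_log hw₂).comp w (hasDerivAt_one_sub_mul (d : ℝ) w)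
  refine ((((h₁.const_mul ((d : ℝ) + 1)).sub (hasDerivAt_log hw)).sub
    (h₂.const_mul (d : ℝ))).div_const (log 2)).congr_deriv ?_
  field_simp
  ring

end Derivatives

section Domain

variable {d : ℕ} {w : ℝ}

theorem one_sub_mul_succ_pos (hw : w ∈ Ioo (0 : ℝ) (1 / (d + 1))) : 0 < 1 - w * (d + 1) := by
  have := (lt_div_iff₀ (by positivity : (0 : ℝ) < d + 1)).1 hw.2
  linarith

theorem one_sub_mul_pos (hw : w ∈ Ioo (0 : ℝ) (1 / (d + 1))) : 0 < 1 - w * d := by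
  linarith [one_sub_mul_succ_pos hw, hw.1]

theorem hasDerivAt_sigmaExp_of_mem (hw : w ∈ Ioo (0 : ℝ) (1 / (d + 1))) :
    HasDerivAt (sigmaExp d) (sigmaExpDeriv d w) w :=
  hasDerivAt_sigmaExp d hw.1.ne' (one_sub_mul_succ_pos hw).ne' (one_sub_mul_pos hw).ne'

end Domain

theorem strictAntiOn_sigmaExpDeriv (d : ℕ) :
    StrictAntiOn (sigmaExpDeriv d) (Ioo 0 (1 / ((d : ℝ) + 1))) := by
  have hderiv (w : ℝ) (hw : w ∈ Ioo (0 : ℝ) (1 / (d + 1))) :=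
    hasDerivAt_sigmaExpDeriv d hw.1.ne' (one_sub_mul_succ_pos hw).ne' (one_sub_mul_pos hw).ne'
  refine strictAntiOn_of_deriv_neg (convex_Ioo _ _)
    (fun w hw => (hderiv w hw).continuousAt.continuousWithinAt) fun w hw => ?_
  rw [interior_Ioo] at hw
  rw [(hderiv w hw).deriv]
  have h₁ := one_sub_mul_succ_pos hw
  have hsq : (d : ℝ) ^ 2 / (1 - w * d) < (d + 1) ^ 2 / (1 - w * (d + 1)) := by
    calc (d : ℝ) ^ 2 / (1 - w * d) ≤ d ^ 2 / (1 - w * (d + 1)) :=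
          div_le_div_of_nonneg_left (sq_nonneg _) h₁ (by linarith [hw.1])
      _ < (d + 1) ^ 2 / (1 - w * (d + 1)) := by gcongr; linarith
  have := one_div_pos.2 hw.1
  exact div_neg_of_neg_of_pos (by linarith) (log_pos one_lt_two)

theorem strictConcaveOn_sigmaExp (d : ℕ) :
    StrictConcaveOn ℝ (Ioo 0 (1 / ((d : ℝ) + 1))) (sigmaExp d) := by
  refine StrictAntiOn.strictConcaveOn_of_deriv (convex_Ioo _ _)
    (fun w hw => (hasDerivAt_sigmaExp_of_mem hw).continuousAt.continuousWithinAt) ?_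
  rw [interior_Ioo]
  refine (strictAntiOn_sigmaExpDeriv d).congr fun w hw => ?_
  exact (hasDerivAt_sigmaExp_of_mem hw).deriv.symm

section Root

variable {d : ℕ} {ρ : ℝ} (hρ : 0 < ρ) (hρd : ρ ^ (d + 1) = 1 - ρ)
include hρ hρd

theorem one_add_one_sub_mul_pos : 0 < 1 + (1 - ρ) * d := by
  have : 0 < 1 - ρ := hρd ▸ pow_pos hρ _
  positivity

theorem one_sub_div_mem_Ioo :
    (1 - ρ) / (1 + (1 - ρ) * d) ∈ Ioo (0 : ℝ) (1 / (d + 1)) := by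
  have hD := one_add_one_sub_mul_pos hρ hρd
  refine ⟨div_pos (hρd ▸ pow_pos hρ _) hD, ?_⟩
  rw [div_lt_div_iff₀ hD (by positivity)]
  nlinarith

theorem one_sub_one_sub_div_mul :
    1 - (1 - ρ) / (1 + (1 - ρ) * d) * d = 1 / (1 + (1 - ρ) * d) := by
  field_simp [(one_add_one_sub_mul_pos hρ hρd).ne']
  ring

theorem sigmaExp_one_sub_div : sigmaExp d ((1 - ρ) / (1 + (1 - ρ) * d)) = -logb 2 ρ := by
  have hD := (one_add_one_sub_mul_pos hρ hρd).ne'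
  have hp : (1 - ρ) / (1 + (1 - ρ) * d) / (1 / (1 + (1 - ρ) * d)) = 1 - ρ := by field_simp
  rw [sigmaExp, one_sub_one_sub_div_mul hρ hρd, hp, binEnt_one_sub_of_pow_succ_eq hρd]
  field_simp

theorem sigmaExpDeriv_one_sub_div : sigmaExpDeriv d ((1 - ρ) / (1 + (1 - ρ) * d)) = 0 := by
  have hD := (one_add_one_sub_mul_pos hρ hρd).ne'
  have h₁ : 1 - (1 - ρ) / (1 + (1 - ρ) * d) * (d + 1) = ρ / (1 + (1 - ρ) * d) := by
    field_simp
    ring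
  have h₂ : (1 - ρ) / (1 + (1 - ρ) * d) = ρ ^ (d + 1) / (1 + (1 - ρ) * d) := by rw [hρd]
  rw [sigmaExpDeriv, h₁, one_sub_one_sub_div_mul hρ hρd, h₂, log_div hρ.ne' hD,
    log_div (pow_ne_zero _ hρ.ne') hD, one_div, log_inv, log_pow]
  push_cast
  ring

end Root

theorem stmt10 (d : ℕ) :
    StrictConcaveOn ℝ (Set.Ioo 0 (1 / ((d : ℝ) + 1))) (sigmaExp d) ∧
    (∀ ρ : ℝ, 0 < ρ → 1 - ρ - ρ ^ (d + 1) = 0 →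
      sigmaExp d ((1 - ρ) / (1 + (1 - ρ) * d)) = -Real.logb 2 ρ ∧
      (1 - ρ) / (1 + (1 - ρ) * d) ∈ Set.Ioo (0 : ℝ) (1 / ((d : ℝ) + 1)) ∧
      ∀ w ∈ Set.Ioo (0 : ℝ) (1 / ((d : ℝ) + 1)),
        w ≠ (1 - ρ) / (1 + (1 - ρ) * d) →
        sigmaExp d w < sigmaExp d ((1 - ρ) / (1 + (1 - ρ) * d))) := by
  refine ⟨strictConcaveOn_sigmaExp d, fun ρ hρ hroot => ?_⟩
  have hρd : ρ ^ (d + 1) = 1 - ρ := by linarith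
  have hmem := one_sub_div_mem_Ioo hρ hρd
  refine ⟨sigmaExp_one_sub_div hρ hρd, hmem, fun w hw hne => ?_⟩
  refine (strictConcaveOn_sigmaExp d).lt_of_hasDerivAt_eq_zero hmem hw hne ?_
  simpa only [sigmaExpDeriv_one_sub_div hρ hρd] using hasDerivAt_sigmaExp_of_mem hmem
end

section
/- The number of points in the ball of radius r around any point of Z^m in the asymmetric distance d_a equals Σ_i C(m,i)·C(r,i)·C(r+m-i, m-i). -/
/-!
A point `z` of the ball of radius `r` around `0` is determined by its positive part `p` and
negative part `q`: two `ℕ`-valued functions with disjoint supports and `∑ p ≤ r`, `∑ q ≤ r`.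
Fixing the support `S` of `q`, with `#S = i`, `q` is a composition of at most `r` into `i`
positive parts (`C(r, i)` choices) and `p` a weak composition of at most `r` into the remaining
`m - i` parts (`C(r + m - i, m - i)` choices); there are `C(m, i)` such `S`.
The ball around any other point is a translate.
-/

open Finset

namespace Finset

variable {ι : Type*} [DecidableEq ι]

lemma card_piAntidiag_nat (s : Finset ι) (n : ℕ) :
    #(piAntidiag s n) = (#s).multichoose n := by
  rw [← card_finsuppAntidiag_nat_eq_multichoose, finsuppAntidiag, card_map, card_attach]

lemma pairwiseDisjoint_piAntidiag {μ : Type*} [AddCommMonoid μ] [HasAntidiagonal μ]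
    [DecidableEq μ] (s : Finset ι) (t : Set μ) : t.PairwiseDisjoint (piAntidiag s) :=
  fun _ _ _ _ hmn ↦ disjoint_left.2 fun _ hm hn ↦
    hmn ((mem_piAntidiag.1 hm).1.symm.trans (mem_piAntidiag.1 hn).1)

def piAntidiagLE (s : Finset ι) (r : ℕ) : Finset (ι → ℕ) :=
  (range (r + 1)).disjiUnion (piAntidiag s) (pairwiseDisjoint_piAntidiag s _)

def posPiAntidiagLE (s : Finset ι) (r : ℕ) : Finset (ι → ℕ) :=
  {f ∈ piAntidiagLE s r | ∀ i ∈ s, 0 < f i}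

variable {s : Finset ι} {r : ℕ} {f : ι → ℕ}

@[simp]
lemma mem_piAntidiagLE : f ∈ piAntidiagLE s r ↔ s.sum f ≤ r ∧ ∀ i, f i ≠ 0 → i ∈ s := by
  simp [piAntidiagLE]

lemma mem_piAntidiagLE_iff_sum_univ [Fintype ι] :
    f ∈ piAntidiagLE s r ↔ ∑ i, f i ≤ r ∧ ∀ i, f i ≠ 0 → i ∈ s := by
  rw [mem_piAntidiagLE, and_congr_left_iff]
  intro hs
  rw [sum_subset (subset_univ s) fun i _ hi ↦ by_contra fun h ↦ hi (hs i h)]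

@[simp]
lemma mem_posPiAntidiagLE :
    f ∈ posPiAntidiagLE s r ↔ f ∈ piAntidiagLE s r ∧ ∀ i ∈ s, 0 < f i :=
  mem_filter

lemma card_piAntidiagLE (s : Finset ι) (r : ℕ) : #(piAntidiagLE s r) = (r + #s).choose #s := by
  rw [piAntidiagLE, card_disjiUnion, sum_congr rfl fun n _ ↦ card_piAntidiag_nat s n,
    Nat.sum_range_multichoose]

lemma sum_add_ite_mem (s : Finset ι) (g : ι → ℕ) :
    s.sum (g + fun i ↦ if i ∈ s then 1 else 0) = s.sum g + #s := by
  simp only [Pi.add_apply]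
  rw [sum_add_distrib, sum_ite_mem, inter_self, sum_const, smul_eq_mul, mul_one]

lemma posPiAntidiagLE_eq_map (h : #s ≤ r) :
    posPiAntidiagLE s r =
      (piAntidiagLE s (r - #s)).map (addRightEmbedding fun i ↦ if i ∈ s then 1 else 0) := by
  ext f
  simp only [mem_posPiAntidiagLE, mem_piAntidiagLE, mem_map, addRightEmbedding_apply]
  constructor
  · rintro ⟨⟨hsum, hsupp⟩, hpos⟩
    have hf : (f - fun i ↦ if i ∈ s then 1 else 0) + (fun i ↦ if i ∈ s then 1 else 0) = f := by
      funext i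
      by_cases hi : i ∈ s
      · simp [hi, Nat.sub_add_cancel (hpos i hi)]
      · simp [hi]
    refine ⟨_, ⟨?_, fun i hi ↦ hsupp i fun h0 ↦ hi (by simp [h0])⟩, hf⟩
    have := sum_add_ite_mem s (f - fun i ↦ if i ∈ s then 1 else 0)
    rw [hf] at this
    omega
  · rintro ⟨g, ⟨hsum, hsupp⟩, rfl⟩
    refine ⟨⟨?_, fun i hi ↦ ?_⟩, fun i hi ↦ by simp [hi]⟩
    · rw [sum_add_ite_mem]
      omega
    · by_contra his
      simp only [Pi.add_apply, his, if_false, add_zero] at hi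
      exact his (hsupp i hi)

lemma card_posPiAntidiagLE (s : Finset ι) (r : ℕ) :
    #(posPiAntidiagLE s r) = r.choose #s := by
  rcases le_or_gt #s r with h | h
  · rw [posPiAntidiagLE_eq_map h, card_map, card_piAntidiagLE, Nat.sub_add_cancel h]
  · rw [Nat.choose_eq_zero_of_lt h, card_eq_zero, posPiAntidiagLE, filter_eq_empty_iff]
    rintro f hf hpos
    have hsum := (mem_piAntidiagLE.1 hf).1
    have hcard : #s ≤ s.sum f := by simpa using card_nsmul_le_sum s f 1 hpos
    omega

end Finset

section

variable {ι : Type*} [Fintype ι] [DecidableEq ι]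

variable (ι) in
def disjointSupportPairs (r : ℕ) : Finset ((ι → ℕ) × (ι → ℕ)) :=
  {pq ∈ piAntidiagLE (univ : Finset ι) r ×ˢ piAntidiagLE univ r | ∀ i, pq.1 i = 0 ∨ pq.2 i = 0}

lemma filter_disjointSupportPairs_eq_product (r : ℕ) (S : Finset ι) :
    {pq ∈ disjointSupportPairs ι r | ({i | pq.2 i ≠ 0} : Finset ι) = S} =
      piAntidiagLE Sᶜ r ×ˢ posPiAntidiagLE S r := by
  ext ⟨p, q⟩
  simp only [disjointSupportPairs, mem_filter, mem_product, mem_posPiAntidiagLE,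
    mem_piAntidiagLE_iff_sum_univ, Finset.ext_iff, mem_compl, mem_univ, true_and]
  grind

lemma card_disjointSupportPairs (r : ℕ) :
    #(disjointSupportPairs ι r) = ∑ k ∈ range (Fintype.card ι + 1),
      (Fintype.card ι).choose k * r.choose k *
        (r + (Fintype.card ι - k)).choose (Fintype.card ι - k) := by
  rw [card_eq_sum_card_fiberwise (f := fun pq ↦ ({i | pq.2 i ≠ 0} : Finset ι))
      (t := univ.powerset) fun _ _ ↦ mem_powerset.2 (subset_univ _),
    sum_congr rfl fun S _ ↦ by rw [filter_disjointSupportPairs_eq_product, card_product,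
      card_piAntidiagLE, card_posPiAntidiagLE, card_compl],
    sum_powerset_apply_card
      fun k ↦ (r + (Fintype.card ι - k)).choose (Fintype.card ι - k) * r.choose k, card_univ]
  refine sum_congr rfl fun k _ ↦ ?_
  rw [smul_eq_mul]
  ring

lemma toNat_sub_of_disjoint {p q : ℕ} (h : p = 0 ∨ q = 0) :
    ((p : ℤ) - q).toNat = p ∧ (-((p : ℤ) - q)).toNat = q := by
  omega

lemma injOn_sub_disjointSupportPairs (r : ℕ) :
    Set.InjOn (fun pq : (ι → ℕ) × (ι → ℕ) ↦ fun i ↦ (pq.1 i : ℤ) - pq.2 i)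
      ↑(disjointSupportPairs ι r) := by
  rintro ⟨p, q⟩ hpq ⟨p', q'⟩ hpq' h
  simp only [mem_coe, disjointSupportPairs, mem_filter] at hpq hpq'
  have hi (i : ι) := congrFun h i
  simp only at hi
  refine Prod.ext (funext fun i ↦ ?_) (funext fun i ↦ ?_) <;>
    have := hi i <;> have := hpq.2 i <;> have := hpq'.2 i <;> dsimp only <;> omega

lemma image_sub_disjointSupportPairs (r : ℕ) :
    (fun pq : (ι → ℕ) × (ι → ℕ) ↦ fun i ↦ (pq.1 i : ℤ) - pq.2 i) '' ↑(disjointSupportPairs ι r) =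
      {z : ι → ℤ | ∑ i, max (z i) 0 ≤ r ∧ ∑ i, max (-z i) 0 ≤ r} := by
  have hsum (z : ι → ℤ) : ∑ i, max (z i) 0 = ((∑ i, (z i).toNat : ℕ) : ℤ) := by
    push_cast
    exact sum_congr rfl fun i _ ↦ (Int.toNat_eq_max _).symm
  ext z
  simp only [Set.mem_ofPred_eq, Set.mem_image, mem_coe, disjointSupportPairs, mem_filter,
    mem_product, mem_piAntidiagLE_iff_sum_univ, mem_univ, implies_true, and_true, hsum,
    Nat.cast_le, Prod.exists]
  constructor
  · rintro ⟨p, q, ⟨⟨hp, hq⟩, hpq⟩, rfl⟩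
    simp only [(toNat_sub_of_disjoint (hpq _)).1, (toNat_sub_of_disjoint (hpq _)).2]
    exact ⟨hp, hq⟩
  · rintro ⟨hp, hn⟩
    exact ⟨fun i ↦ (z i).toNat, fun i ↦ (-z i).toNat, ⟨⟨hp, hn⟩, fun i ↦ by dsimp only; omega⟩,
      funext fun i ↦ by dsimp only; omega⟩

lemma ncard_setOf_sum_posPart_le_and_sum_negPart_le (r : ℕ) :
    {z : ι → ℤ | ∑ i, max (z i) 0 ≤ r ∧ ∑ i, max (-z i) 0 ≤ r}.ncard =
      #(disjointSupportPairs ι r) := by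
  rw [← image_sub_disjointSupportPairs, (injOn_sub_disjointSupportPairs r).ncard_image,
    Set.ncard_coe_finset]

end

/-- The asymmetric distance on `ℤ^m`. -/
def da (m : ℕ) (x y : Fin m → ℤ) : ℤ :=
  max (∑ i, max (x i - y i) 0) (∑ i, max (y i - x i) 0)

theorem stmt14 (m r : ℕ) (x : Fin m → ℤ) :
    Set.ncard {y : Fin m → ℤ | da m x y ≤ (r : ℤ)} =
      ∑ i ∈ Finset.range (m + 1),
        Nat.choose m i * Nat.choose r i * Nat.choose (r + m - i) (m - i) := by
  have hball : {y : Fin m → ℤ | da m x y ≤ (r : ℤ)} =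
      (x + ·) '' {z | ∑ i, max (z i) 0 ≤ r ∧ ∑ i, max (-z i) 0 ≤ r} := by
    rw [Set.image_add_left]
    ext y
    simp [da, and_comm, neg_add_eq_sub]
  rw [hball, Set.ncard_image_of_injective _ (add_right_injective x),
    ncard_setOf_sum_posPart_le_and_sum_negPart_le, card_disjointSupportPairs, Fintype.card_fin]
  refine sum_congr rfl fun i hi ↦ ?_
  rw [Nat.add_sub_assoc (Nat.lt_succ_iff.1 (mem_range.1 hi))]
end

section
/- The number of points in the ball of radius r around any point of Z^m in the Manhattan (ℓ1) distance equals Σ_i 2^i·C(m,i)·C(r,i). -/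
/-!
Translating by `x` reduces to the ball around `0`. Slicing that ball by the value `k` of the
first coordinate leaves a ball of radius `r - |k|` in one dimension less, so its size `N m r`
satisfies `N (m + 1) r = N m r + 2 * ∑ j < r, N m j`. The Delannoy numbers
`D m r = ∑ i, 2 ^ i * C(m, i) * C(r, i)` satisfy the same recursion, by Pascal's rule in `m`
and the hockey-stick identity in `r`, and both equal `1` for `m = 0`.
-/

open Finset

def delannoy (m n : ℕ) : ℕ :=
  ∑ k ∈ range (m + 1), 2 ^ k * m.choose k * n.choose k

theorem sum_range_choose_eq_choose_succ (n k : ℕ) :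
    ∑ j ∈ range n, j.choose k = n.choose (k + 1) := by
  induction n with
  | zero => simp
  | succ n ih => rw [sum_range_succ, ih, Nat.choose_succ_succ, add_comm]

theorem delannoy_succ_left (m n : ℕ) :
    delannoy (m + 1) n = delannoy m n + 2 * ∑ j ∈ range n, delannoy m j := by
  have pascal (k : ℕ) : 2 ^ (k + 1) * (m + 1).choose (k + 1) * n.choose (k + 1) =
      2 ^ (k + 1) * m.choose (k + 1) * n.choose (k + 1) +
        2 * ∑ j ∈ range n, 2 ^ k * m.choose k * j.choose k := by
    rw [← mul_sum, Nat.choose_succ_succ, sum_range_choose_eq_choose_succ]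
    ring
  have shift : delannoy m n =
      ∑ k ∈ range (m + 1), 2 ^ (k + 1) * m.choose (k + 1) * n.choose (k + 1) + 1 := by
    rw [delannoy, sum_range_succ', sum_range_succ _ m]
    simp [Nat.choose_succ_self]
  rw [delannoy, sum_range_succ', sum_congr rfl fun k _ => pascal k, sum_add_distrib, ← mul_sum,
    sum_comm, shift]
  simp only [delannoy, pow_zero, Nat.choose_zero_right]
  ring

theorem sum_Icc_neg_natAbs {M : Type*} [AddCommMonoid M] (g : ℕ → M) (n : ℕ) :
    ∑ k ∈ Icc (-(n : ℤ)) n, g k.natAbs = g 0 + 2 • ∑ j ∈ range n, g (j + 1) := by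
  induction n with
  | zero => simp
  | succ n ih =>
    have hIcc : Icc (-((n + 1 : ℕ) : ℤ)) (n + 1 : ℕ) =
        insert (-((n + 1 : ℕ) : ℤ)) (insert ((n + 1 : ℕ) : ℤ) (Icc (-(n : ℤ)) n)) := by
      ext k
      simp only [mem_Icc, mem_insert]
      omega
    rw [hIcc, sum_insert (by simp; omega), sum_insert (by simp), ih, sum_range_succ,
      Int.natAbs_neg, Int.natAbs_natCast]
    abel

noncomputable def l1Ball (m r : ℕ) : Finset (Fin m → ℤ) :=
  (Icc (fun _ => -(r : ℤ)) fun _ => (r : ℤ)).filter fun z => ∑ i, (z i).natAbs ≤ r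

theorem natAbs_le_of_sum_natAbs_le {ι : Type*} [Fintype ι] {r : ℕ} {z : ι → ℤ}
    (h : ∑ i, (z i).natAbs ≤ r) (i : ι) : (z i).natAbs ≤ r :=
  (single_le_sum (f := fun j => (z j).natAbs) (fun _ _ => Nat.zero_le _) (mem_univ i)).trans h

theorem mem_l1Ball {m r : ℕ} {z : Fin m → ℤ} : z ∈ l1Ball m r ↔ ∑ i, (z i).natAbs ≤ r := by
  refine ⟨fun h => (mem_filter.1 h).2,
    fun h => mem_filter.2 ⟨mem_Icc.2 ⟨fun i => ?_, fun i => ?_⟩, h⟩⟩ <;>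
  · have := natAbs_le_of_sum_natAbs_le h i
    dsimp
    omega

theorem card_filter_l1Ball_succ_head_eq {m r : ℕ} {k : ℤ} (hk : k.natAbs ≤ r) :
    #{z ∈ l1Ball (m + 1) r | z 0 = k} = #(l1Ball m (r - k.natAbs)) := by
  refine card_nbij' Fin.tail (Fin.cons (α := fun _ => ℤ) k) (fun z hz => ?_) (fun t ht => ?_)
    (fun z hz => ?_) fun _ _ => rfl
  · simp only [coe_filter, Set.mem_ofPred_eq, mem_l1Ball, Fin.sum_univ_succ] at hz
    simp only [mem_coe, mem_l1Ball, Fin.tail]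
    omega
  · simp only [mem_coe, mem_l1Ball] at ht
    simp only [coe_filter, Set.mem_ofPred_eq, mem_l1Ball, Fin.sum_univ_succ, Fin.cons_zero,
      Fin.cons_succ, and_true]
    omega
  · simp only [coe_filter, Set.mem_ofPred_eq] at hz
    rw [← hz.2, Fin.cons_self_tail]

theorem card_l1Ball_succ_eq_sum_Icc (m r : ℕ) :
    #(l1Ball (m + 1) r) = ∑ k ∈ Icc (-(r : ℤ)) r, #(l1Ball m (r - k.natAbs)) := by
  rw [card_eq_sum_card_fiberwise (f := fun z => z 0) (t := Icc (-(r : ℤ)) r) fun z hz => ?_]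
  · refine sum_congr rfl fun k hk => card_filter_l1Ball_succ_head_eq ?_
    rw [mem_Icc] at hk
    omega
  · have := natAbs_le_of_sum_natAbs_le (mem_l1Ball.1 hz) 0
    rw [coe_Icc, Set.mem_Icc]
    dsimp
    omega

theorem card_l1Ball_succ (m r : ℕ) :
    #(l1Ball (m + 1) r) = #(l1Ball m r) + 2 * ∑ j ∈ range r, #(l1Ball m j) := by
  rw [card_l1Ball_succ_eq_sum_Icc, sum_Icc_neg_natAbs (fun t => #(l1Ball m (r - t))), smul_eq_mul,
    Nat.sub_zero, ← sum_range_reflect (fun j => #(l1Ball m j))]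
  congr 2
  exact sum_congr rfl fun j _ => by rw [Nat.sub_sub, add_comm]

theorem card_l1Ball (m r : ℕ) : #(l1Ball m r) = delannoy m r := by
  induction m generalizing r with
  | zero => simp [l1Ball, delannoy, Pi.card_Icc]
  | succ m ih => simp only [card_l1Ball_succ, ih, delannoy_succ_left]

theorem stmt15 (m r : ℕ) (x : Fin m → ℤ) :
    Set.ncard {y : Fin m → ℤ | ∑ i, (x i - y i).natAbs ≤ r} =
      ∑ i ∈ Finset.range (m + 1), 2 ^ i * Nat.choose m i * Nat.choose r i := by
  have hball : {y : Fin m → ℤ | ∑ i, (x i - y i).natAbs ≤ r} = (x - ·) '' l1Ball m r := by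
    ext y
    refine ⟨fun h => ⟨x - y, by simpa [mem_l1Ball] using h, sub_sub_cancel x y⟩, ?_⟩
    rintro ⟨z, hz, rfl⟩
    simpa [mem_l1Ball] using hz
  rw [hball, Set.ncard_image_of_injective _ sub_right_injective, Set.ncard_coe_finset,
    card_l1Ball, delannoy]
end

section
/- Let L₀ ⊆ Z^m be a subgroup (lattice) of finite index N with minimum Manhattan distance d_s(L₀) > 2t among distinct points, and suppose L₀ ⊆ A_{m-1} = {u ∈ Z^m : Σ u_i = 0}. Define L = ⋃_{k∈Z} (L₀ + k(2t+1)e₁) where e₁ = (1,0,...,0). Then L is a subgroup of Z^m with minimum Manhattan distance at least 2t+1 between distinct points, and the index of L in Z^m equals (2t+1)·[A_{m-1} : L₀]. -/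
/-- The coordinate-sum homomorphism on `ℤ^m`. -/
def sumHom (m : ℕ) : (Fin m → ℤ) →+ ℤ where
  toFun u := ∑ i, u i
  map_zero' := by simp
  map_add' a b := by simp [Finset.sum_add_distrib]

/-- The root lattice `A_{m-1}` of integer vectors with zero coordinate sum. -/
def zeroSumLattice (m : ℕ) : AddSubgroup (Fin m → ℤ) := (sumHom m).ker

/-!
The coordinate sum `σ` vanishes on `L₀` and maps `u + k(2t+1)e₁` to `k(2t+1)`. Since `|σ x|` is
at most the ℓ¹ norm of `x`, a nonzero vector of `L` either lies in `L₀` (k = 0) or has norm at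
least `2t+1`. For the index, `L` sits inside `σ⁻¹((2t+1)ℤ)`, of index `2t+1` in `ℤ^m`, and meets
`A_{m-1} = ker σ` exactly in `L₀`, so `[σ⁻¹((2t+1)ℤ) : L] = [A_{m-1} : L₀]`.
-/

namespace AddSubgroup

variable {G : Type*} [AddCommGroup G]

theorem mem_sup_zmultiples_iff {H : AddSubgroup G} {e x : G} :
    x ∈ H ⊔ zmultiples e ↔ ∃ u ∈ H, ∃ k : ℤ, x = u + k • e := by
  rw [mem_sup]
  constructor
  · rintro ⟨u, hu, _, ⟨k, rfl⟩, rfl⟩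
    exact ⟨u, hu, k, rfl⟩
  · rintro ⟨u, hu, k, rfl⟩
    exact ⟨u, hu, k • e, zsmul_mem (mem_zmultiples e) k, rfl⟩

theorem sup_zmultiples_inf_ker {f : G →+ ℤ} {H : AddSubgroup G} {e : G}
    (hH : H ≤ f.ker) (he : f e ≠ 0) : (H ⊔ zmultiples e) ⊓ f.ker = H := by
  refine le_antisymm ?_ (le_inf le_sup_left hH)
  intro x hx
  obtain ⟨hx, hxf⟩ := mem_inf.mp hx
  obtain ⟨u, hu, k, rfl⟩ := mem_sup_zmultiples_iff.mp hx
  rw [AddMonoidHom.mem_ker, map_add, AddMonoidHom.mem_ker.mp (hH hu), zero_add,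
    map_zsmul, smul_eq_mul, mul_eq_zero, or_iff_left he] at hxf
  simpa [hxf] using hu

theorem ker_sup_zmultiples (f : G →+ ℤ) (e : G) :
    f.ker ⊔ zmultiples e = comap f (zmultiples (f e)) := by
  refine le_antisymm (sup_le (fun x hx => ?_) ?_) fun x hx => ?_
  · simp [AddMonoidHom.mem_ker.mp hx]
  · rw [zmultiples_le, mem_comap]
    exact mem_zmultiples _
  · obtain ⟨k, hk⟩ := mem_zmultiples_iff.mp (mem_comap.mp hx)
    refine mem_sup.mpr ⟨x - k • e, ?_, k • e, zsmul_mem (mem_zmultiples e) k, sub_add_cancel _ _⟩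
    simp [AddMonoidHom.mem_ker, ← hk]

theorem index_sup_zmultiples {f : G →+ ℤ} (hf : Function.Surjective f) {H : AddSubgroup G}
    {e : G} (hH : H ≤ f.ker) (he : f e ≠ 0) :
    (H ⊔ zmultiples e).index = (f e).natAbs * H.relIndex f.ker := by
  have hK : comap f (zmultiples (f e)) = f.ker ⊔ (H ⊔ zmultiples e) := by
    rw [← ker_sup_zmultiples, ← sup_assoc, sup_eq_left.mpr hH]
  have hrel : (H ⊔ zmultiples e).relIndex (comap f (zmultiples (f e))) = H.relIndex f.ker := by
    rw [hK, relIndex_sup_right, ← inf_relIndex_right, sup_zmultiples_inf_ker hH he]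
  rw [← relIndex_mul_index (hK ▸ le_sup_right), hrel, index_comap_of_surjective _ hf,
    Int.index_zmultiples, mul_comm]

end AddSubgroup

open AddSubgroup

theorem mem_zeroSumLattice {m : ℕ} {u : Fin m → ℤ} : u ∈ zeroSumLattice m ↔ sumHom m u = 0 :=
  Iff.rfl

theorem sumHom_single {m : ℕ} (i : Fin m) (a : ℤ) : sumHom m (Pi.single i a) = a := by
  simp [sumHom]

theorem sumHom_surjective {m : ℕ} (hm : 0 < m) : Function.Surjective (sumHom m) :=
  fun a => ⟨Pi.single ⟨0, hm⟩ a, sumHom_single _ a⟩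

theorem natAbs_sumHom_le {m : ℕ} (x : Fin m → ℤ) : (sumHom m x).natAbs ≤ ∑ i, (x i).natAbs :=
  Int.natAbs_sum_le Finset.univ x

theorem le_sum_natAbs_of_mem_sup_zmultiples {m d : ℕ} {H : AddSubgroup (Fin m → ℤ)}
    (hH : H ≤ zeroSumLattice m) (hd : ∀ u ∈ H, u ≠ 0 → d ≤ ∑ i, (u i).natAbs)
    {e : Fin m → ℤ} (he : d ≤ (sumHom m e).natAbs) {x : Fin m → ℤ}
    (hx : x ∈ H ⊔ zmultiples e) (hx0 : x ≠ 0) : d ≤ ∑ i, (x i).natAbs := by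
  obtain ⟨u, hu, k, rfl⟩ := mem_sup_zmultiples_iff.mp hx
  rcases eq_or_ne k 0 with rfl | hk
  · simp only [zero_smul, add_zero] at hx0 ⊢
    exact hd u hu hx0
  · have hsum : sumHom m (u + k • e) = k * sumHom m e := by
      rw [map_add, mem_zeroSumLattice.mp (hH hu), zero_add, map_zsmul, smul_eq_mul]
    calc d ≤ (sumHom m e).natAbs := he
      _ ≤ k.natAbs * (sumHom m e).natAbs := Nat.le_mul_of_pos_left _ (Int.natAbs_pos.mpr hk)
      _ = (sumHom m (u + k • e)).natAbs := by rw [hsum, Int.natAbs_mul]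
      _ ≤ _ := natAbs_sumHom_le _

theorem stmt19_general (m t : ℕ) (hm : 0 < m) (L0 : AddSubgroup (Fin m → ℤ))
    (hsub : L0 ≤ zeroSumLattice m)
    (hdist : ∀ u ∈ L0, ∀ v ∈ L0, u ≠ v → 2 * t < ∑ i, (u i - v i).natAbs) :
    ∃ L : AddSubgroup (Fin m → ℤ),
      (L : Set (Fin m → ℤ)) =
        {v | ∃ u ∈ L0, ∃ k : ℤ,
          v = u + k • ((2 * (t : ℤ) + 1) • Pi.single (⟨0, hm⟩ : Fin m) (1 : ℤ))} ∧
      (∀ u ∈ L, ∀ v ∈ L, u ≠ v → 2 * t + 1 ≤ ∑ i, (u i - v i).natAbs) ∧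
      L.index = (2 * t + 1) * L0.relIndex (zeroSumLattice m) := by
  set e : Fin m → ℤ := (2 * (t : ℤ) + 1) • Pi.single ⟨0, hm⟩ 1
  have he : sumHom m e = 2 * t + 1 := by
    rw [map_zsmul, sumHom_single, smul_eq_mul, mul_one]
  have hL0 : ∀ u ∈ L0, u ≠ 0 → 2 * t + 1 ≤ ∑ i, (u i).natAbs := fun u hu hu0 => by
    simpa using hdist u hu 0 L0.zero_mem hu0
  refine ⟨L0 ⊔ zmultiples e, Set.ext fun x => mem_sup_zmultiples_iff, fun u hu v hv huv => ?_, ?_⟩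
  · simpa using le_sum_natAbs_of_mem_sup_zmultiples hsub hL0 (by omega) (sub_mem hu hv)
      (sub_ne_zero.mpr huv)
  · rw [index_sup_zmultiples (sumHom_surjective hm) hsub (by omega), he]
    rfl

theorem stmt19 (m t : ℕ) (hm : 0 < m) (L0 : AddSubgroup (Fin m → ℤ))
    (hsub : L0 ≤ zeroSumLattice m)
    (hN : L0.relIndex (zeroSumLattice m) ≠ 0)
    (hdist : ∀ u ∈ L0, ∀ v ∈ L0, u ≠ v → 2 * t < ∑ i, (u i - v i).natAbs) :
    ∃ L : AddSubgroup (Fin m → ℤ),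
      (L : Set (Fin m → ℤ)) =
        {v | ∃ u ∈ L0, ∃ k : ℤ,
          v = u + k • ((2 * (t : ℤ) + 1) • Pi.single (⟨0, hm⟩ : Fin m) (1 : ℤ))} ∧
      (∀ u ∈ L, ∀ v ∈ L, u ≠ v → 2 * t + 1 ≤ ∑ i, (u i - v i).natAbs) ∧
      L.index = (2 * t + 1) * L0.relIndex (zeroSumLattice m) :=
  stmt19_general m t hm L0 hsub hdist
end
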